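/- Let A and B be groups and let A ∗ B denote their free product, with canonical inclusions ι_A : A → A ∗ B and ι_B : B → A ∗ B. Let a ∈ A and b ∈ B be nonidentity elements. Then every finite sequence g₀, g₁, …, g_n of elements of A ∗ B with g₀ = ι_A(a), g_n = ι_B(b), and with each consecutive ratio g_i⁻¹ · g_{i+1} lying in ι_A(A) ∪ ι_B(B), must contain the identity element; that is, g_i = 1 for some i. (Equivalently: the complement of the identity vertex in the Cayley graph of A ∗ B with respect to the generating set ι_A(A) ∪ ι_B(B) is disconnected, separating ι_A(a) from ι_B(b).) -/

import Mathlib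

/-!
Identify `A ∗ B` with the free product of the `Bool`-indexed family `(A, B)` and attach to
every nontrivial element the factor containing the first letter of its reduced word. If `z` and
`z * x` are both nontrivial for a generator `x`, this factor is the same for both: otherwise the
reduced words of `z⁻¹` and `z * x` concatenate to a reduced word with at least two letters
representing `x`. So the first factor is constant along a path avoiding `1`, but it is `A` at
`ι_A(a)` and `B` at `ι_B(b)`.
-/

namespace Monoid.CoprodI

section Monoid

variable {ι : Type*} {M : ι → Type*} [∀ i, Monoid (M i)] [DecidableEq ι]
  [∀ i, DecidableEq (M i)]

theorem Word.equiv_prod (w : Word M) : Word.equiv w.prod = w :=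
  Word.equiv.apply_symm_apply w

theorem NeWord.fstIdx_equiv_prod {i j : ι} (w : NeWord M i j) :
    (Word.equiv w.prod).fstIdx = some i := by
  rw [NeWord.prod, Word.equiv_prod]
  simp [Word.fstIdx, NeWord.toWord]

theorem fstIdx_equiv_of {i : ι} (x : M i) (hx : x ≠ 1) :
    (Word.equiv (of x)).fstIdx = some i := by
  rw [← NeWord.prod_singleton x hx, NeWord.fstIdx_equiv_prod]

end Monoid

variable {ι : Type*} {G : ι → Type*} [∀ i, Group (G i)] [DecidableEq ι]
  [∀ i, DecidableEq (G i)]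

theorem NeWord.prod_append_ne_of {i j k l m : ι} (w₁ : NeWord G i j) (hne : j ≠ k)
    (w₂ : NeWord G k l) (x : G m) : (w₁.append hne w₂).prod ≠ of x := by
  intro h
  have hlist : ∀ v : Word G, Word.equiv (of x) = v → w₁.toList ++ w₂.toList = v.toList :=
    fun v hv => by rw [← hv, ← h, NeWord.prod, Word.equiv_prod]; rfl
  by_cases hx : x = 1
  · have := hlist Word.empty (by rw [hx, map_one]; rfl)
    simp [w₁.toList_ne_nil] at this
  · have := hlist (NeWord.singleton x hx).toWord
      (by rw [← NeWord.prod_singleton x hx, NeWord.prod, Word.equiv_prod])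
    simp [NeWord.toWord, List.append_eq_singleton_iff, w₁.toList_ne_nil,
      w₂.toList_ne_nil] at this

theorem fstIdx_equiv_mul_of {z : CoprodI G} {m : ι} (x : G m) (hz : z ≠ 1)
    (hzx : z * of x ≠ 1) : (Word.equiv (z * of x)).fstIdx = (Word.equiv z).fstIdx := by
  have nonempty {y : CoprodI G} (hy : y ≠ 1) : Word.equiv y ≠ Word.empty := fun h =>
    hy (by rw [← Word.equiv.symm_apply_apply y, h]; rfl)
  obtain ⟨i₁, j₁, w₁, hw₁⟩ := NeWord.of_word _ (nonempty hz)
  obtain ⟨i₂, j₂, w₂, hw₂⟩ := NeWord.of_word _ (nonempty hzx)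
  have hprod₁ : w₁.prod = z := by rw [NeWord.prod, hw₁]; exact Word.equiv.symm_apply_apply z
  have hprod₂ : w₂.prod = z * of x := by
    rw [NeWord.prod, hw₂]; exact Word.equiv.symm_apply_apply _
  rw [← hprod₂, ← hprod₁, w₂.fstIdx_equiv_prod, w₁.fstIdx_equiv_prod, Option.some_inj]
  by_contra hne
  -- `w₁⁻¹ w₂` is a reduced word with at least two letters representing the generator `of x`.
  refine NeWord.prod_append_ne_of w₁.inv (Ne.symm hne) w₂ x ?_
  rw [NeWord.append_prod, NeWord.inv_prod, hprod₁, hprod₂, inv_mul_cancel_left]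

theorem fstIdx_equiv_last_eq_fstIdx_equiv_zero {n : ℕ} (g : Fin (n + 1) → CoprodI G)
    (hg : ∀ k, g k ≠ 1)
    (hstep : ∀ k : Fin n, ∃ (i : ι) (x : G i), g k.succ = g k.castSucc * of x) :
    (Word.equiv (g (Fin.last n))).fstIdx = (Word.equiv (g 0)).fstIdx := by
  induction n with
  | zero => rfl
  | succ n ih =>
    obtain ⟨i, x, hx⟩ := hstep (Fin.last n)
    calc (Word.equiv (g (Fin.last (n + 1)))).fstIdx
        = (Word.equiv (g (Fin.last n).castSucc)).fstIdx := by
          rw [← Fin.succ_last, hx, fstIdx_equiv_mul_of x (hg _) (hx ▸ hg _)]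
      _ = (Word.equiv (g 0)).fstIdx :=
          ih (fun k => g k.castSucc) (fun k => hg _) (fun k => hstep k.castSucc)

end Monoid.CoprodI

universe u v

namespace Monoid.Coprod

variable (A : Type u) (B : Type v) [Group A] [Group B]

def boolFamily : Bool → Type (max u v) := fun b => cond b (ULift.{v} A) (ULift.{u} B)

instance : ∀ b, Group (boolFamily A B b)
  | true => inferInstanceAs (Group (ULift A))
  | false => inferInstanceAs (Group (ULift B))

def toCoprodI : Coprod A B →* CoprodI (boolFamily A B) :=
  lift ((CoprodI.of (i := true)).comp MulEquiv.ulift.symm.toMonoidHom)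
    ((CoprodI.of (i := false)).comp MulEquiv.ulift.symm.toMonoidHom)

def ofCoprodI : CoprodI (boolFamily A B) →* Coprod A B :=
  CoprodI.lift fun
    | true => inl.comp MulEquiv.ulift.toMonoidHom
    | false => inr.comp MulEquiv.ulift.toMonoidHom

variable {A B}

@[simp]
theorem toCoprodI_inl (x : A) :
    toCoprodI A B (inl x) = CoprodI.of (i := true) (ULift.up x) :=
  lift_apply_inl _ _ x

@[simp]
theorem toCoprodI_inr (y : B) :
    toCoprodI A B (inr y) = CoprodI.of (i := false) (ULift.up y) :=
  lift_apply_inr _ _ y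

theorem ofCoprodI_comp_toCoprodI : (ofCoprodI A B).comp (toCoprodI A B) = .id _ := by
  ext x <;> exact CoprodI.lift_of _ _

theorem toCoprodI_injective : Function.Injective (toCoprodI A B) :=
  Function.LeftInverse.injective (DFunLike.congr_fun ofCoprodI_comp_toCoprodI)

theorem exists_toCoprodI_eq_mul_of {z w : Coprod A B}
    (h : z⁻¹ * w ∈
      Set.range (inl : A →* Coprod A B) ∪ Set.range (inr : B →* Coprod A B)) :
    ∃ (b : Bool) (x : boolFamily A B b), toCoprodI A B w = toCoprodI A B z * CoprodI.of x := by
  rcases h with ⟨x, hx⟩ | ⟨y, hy⟩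
  · exact ⟨true, ULift.up x, by rw [← toCoprodI_inl, ← map_mul, hx, mul_inv_cancel_left]⟩
  · exact ⟨false, ULift.up y, by rw [← toCoprodI_inr, ← map_mul, hy, mul_inv_cancel_left]⟩

end Monoid.Coprod

open Monoid in
/-- In a free product `A ∗ B`, any path in the Cayley graph with respect to the
generating set `ι_A(A) ∪ ι_B(B)` from `ι_A(a)` to `ι_B(b)`, where `a ≠ 1` and
`b ≠ 1`, must pass through the identity element.  Equivalently, removing the
identity vertex from this Cayley graph separates `ι_A(a)` from `ι_B(b)`. -/
theorem freeProduct_cayleyGraph_identity_separates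
    (A B : Type*) [Group A] [Group B] (a : A) (b : B)
    (ha : a ≠ 1) (hb : b ≠ 1)
    (n : ℕ) (g : Fin (n + 1) → Coprod A B)
    (h0 : g 0 = Coprod.inl a)
    (hn : g (Fin.last n) = Coprod.inr b)
    (hstep : ∀ i : Fin n,
      (g i.castSucc)⁻¹ * g i.succ ∈
        Set.range (Coprod.inl : A →* Coprod A B) ∪
          Set.range (Coprod.inr : B →* Coprod A B)) :
    ∃ i : Fin (n + 1), g i = 1 := by
  classical
  by_contra! hg
  have ha' : (ULift.up a : Coprod.boolFamily A B true) ≠ 1 := ULift.up_injective.ne ha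
  have hb' : (ULift.up b : Coprod.boolFamily A B false) ≠ 1 := ULift.up_injective.ne hb
  have hfst := CoprodI.fstIdx_equiv_last_eq_fstIdx_equiv_zero
    (fun i => Coprod.toCoprodI A B (g i))
    (fun i => (map_ne_one_iff _ Coprod.toCoprodI_injective).mpr (hg i))
    (fun i => Coprod.exists_toCoprodI_eq_mul_of (hstep i))
  rw [hn, h0, Coprod.toCoprodI_inl, Coprod.toCoprodI_inr] at hfst
  exact Bool.false_ne_true (Option.some_inj.mp
    ((CoprodI.fstIdx_equiv_of _ hb').symm.trans (hfst.trans (CoprodI.fstIdx_equiv_of _ ha'))))
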